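/- arXiv:2304.04724 — 3 statements merged into one kernel-verified Lean document; each statement's English description precedes it below -/
import Mathlib

section
/- Let f : ℝ^d → ℝ be twice continuously differentiable and L-smooth, and let K ≥ 1, η > 0 satisfy K η L^{1/2} ≤ 1/4. For each j ∈ {1,…,K}, let 𝔽_j(q,p) := q_j be the position after j leapfrog steps with step size η started at (q,p), and let D₂𝔽_j(q,p) be the Jacobian of p ↦ 𝔽_j(q,p). Then for all q, p ∈ ℝ^d and 1 ≤ j ≤ K: (i) D₂𝔽_j(q,p) = jη I_d − η² Σ_{ℓ=1}^{j−1} (j−ℓ) ∇²f_{𝔽_ℓ(q,p)} D₂𝔽_ℓ(q,p); (ii) ‖D₂𝔽_j(q,p) − jη I_d‖₂ ≤ j³ η³ L; in particular ‖D₂𝔽_K(q,p) − Kη I_d‖₂ ≤ Kη/16. Consequently, for every q the map p ↦ 𝔽_K(q,p) is invertible with inverse 𝔾(q, ·), and every (complex) eigenvalue of the Jacobian D₂𝔾(q,y) has modulus in [16/(17Kη), 16/(15Kη)]. -/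
open MeasureTheory Real
open scoped ENNReal NNReal

noncomputable section

/-- The Euclidean space `ℝ^d`. -/
abbrev Euc (d : ℕ) := EuclideanSpace ℝ (Fin d)

/-- `leapfrog f η k (q₀,p₀)` is the `k`-th leapfrog iterate with step size `η` for the
potential `f`, starting at `(q₀,p₀)`. -/
def leapfrog {d : ℕ} (f : Euc d → ℝ) (η : ℝ) : ℕ → Euc d × Euc d → Euc d × Euc d
  | 0, z => z
  | (k+1), z =>
      let w := leapfrog f η k z
      let q' := w.1 + η • w.2 - (η^2/2) • gradient f w.1
      (q', w.2 - (η/2) • gradient f w.1 - (η/2) • gradient f q')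

/-- `f` is `L`-smooth: the Hessian has operator norm at most `L` everywhere. -/
def LSmooth {d : ℕ} (f : Euc d → ℝ) (L : ℝ) : Prop :=
  ∀ x, ‖fderiv ℝ (gradient f) x‖ ≤ L

/-- The entries of the third-derivative tensor of `f` at `x`. -/
def tensor3 {ι : Type*} [Fintype ι] [DecidableEq ι]
    (f : EuclideanSpace ℝ ι → ℝ) (x : EuclideanSpace ℝ ι) (i j k : ι) : ℝ :=
  iteratedFDeriv ℝ 3 f x
    ![EuclideanSpace.single i 1, EuclideanSpace.single j 1, EuclideanSpace.single k 1]

/-- The `{1,2,3}`-norm (Frobenius norm) of a 3-tensor. -/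
def norm123 {ι : Type*} [Fintype ι] (A : ι → ι → ι → ℝ) : ℝ :=
  Real.sqrt (∑ i, ∑ j, ∑ k, (A i j k)^2)

/-- The `{1,2}{3}`-norm of a 3-tensor. -/
def norm12_3 {ι : Type*} [Fintype ι] (A : ι → ι → ι → ℝ) : ℝ :=
  sSup { s | ∃ (X : ι → ι → ℝ) (y : ι → ℝ), (∑ i, ∑ j, (X i j)^2) ≤ 1 ∧
    (∑ k, (y k)^2) ≤ 1 ∧ s = ∑ i, ∑ j, ∑ k, A i j k * X i j * y k }

/-- `f` is `γ L^{3/2}`-strongly Hessian Lipschitz. -/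
def StronglyHessLip {d : ℕ} (f : Euc d → ℝ) (γ L : ℝ) : Prop :=
  ∀ x, norm12_3 (tensor3 f x) ≤ γ * L ^ ((3:ℝ)/2)

/-- Distance between two sets. -/
def setDistance {α : Type*} [PseudoMetricSpace α] (S T : Set α) : ℝ :=
  sInf { r | ∃ x ∈ S, ∃ y ∈ T, r = dist x y }

/-- Cheeger isoperimetric inequality with coefficient `ψ`. -/
def CheegerIso {d : ℕ} (μ : Measure (Euc d)) (ψ : ℝ) : Prop :=
  ∀ S1 S2 S3 : Set (Euc d), MeasurableSet S1 → MeasurableSet S2 → MeasurableSet S3 →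
    Disjoint S1 S2 → Disjoint S1 S3 → Disjoint S2 S3 → S1 ∪ S2 ∪ S3 = Set.univ →
    ψ * setDistance S1 S2 * (μ S1).toReal * (μ S2).toReal ≤ (μ S3).toReal

/-- The probability measure proportional to `e^{-f}`. -/
def targetMeasure {d : ℕ} (f : Euc d → ℝ) : Measure (Euc d) :=
  ((volume.withDensity fun x => ENNReal.ofReal (Real.exp (-f x))) Set.univ)⁻¹ •
    (volume.withDensity fun x => ENNReal.ofReal (Real.exp (-f x)))

/-- The standard Gaussian measure `N(0, I_d)` on `ℝ^d`. -/
def stdGaussian (d : ℕ) : Measure (Euc d) :=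
  Measure.map (⇑(EuclideanSpace.equiv (Fin d) ℝ).symm)
    (Measure.pi fun _ : Fin d => ProbabilityTheory.gaussianReal 0 1)

/-- Metropolis acceptance probability of the HMC proposal. -/
def accProb {d : ℕ} (f : Euc d → ℝ) (K : ℕ) (η : ℝ) (q p : Euc d) : ℝ :=
  min 1 (Real.exp (-(f (leapfrog f η K (q,p)).1) - ‖(leapfrog f η K (q,p)).2‖^2/2
    + f q + ‖p‖^2/2))

/-- One step of Metropolized HMC with `K` leapfrog steps and step size `η`, from `q`. -/
def hmcKernel {d : ℕ} (f : Euc d → ℝ) (K : ℕ) (η : ℝ) (q : Euc d) : Measure (Euc d) :=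
  (stdGaussian d).bind fun p =>
    ENNReal.ofReal (accProb f K η q p) • Measure.dirac (leapfrog f η K (q,p)).1 +
    ENNReal.ofReal (1 - accProb f K η q p) • Measure.dirac q

/-- One step of the lazy version of Metropolized HMC. -/
def lazyHMC {d : ℕ} (f : Euc d → ℝ) (K : ℕ) (η : ℝ) (q : Euc d) : Measure (Euc d) :=
  (2:ℝ≥0∞)⁻¹ • Measure.dirac q + (2:ℝ≥0∞)⁻¹ • hmcKernel f K η q

/-- The law of the lazy Metropolized HMC chain after `n` steps started from `μ₀`. -/
def hmcIter {d : ℕ} (f : Euc d → ℝ) (K : ℕ) (η : ℝ) (μ0 : Measure (Euc d)) :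
    ℕ → Measure (Euc d)
  | 0 => μ0
  | (n+1) => (hmcIter f K η μ0 n).bind (lazyHMC f K η)

/-- Total variation distance between two measures. -/
def tvDist {α : Type*} [MeasurableSpace α] (P Q : Measure α) : ℝ :=
  sSup { r | ∃ A, MeasurableSet A ∧ r = |(P A).toReal - (Q A).toReal| }

/-- `ε`-mixing time of lazy Metropolized HMC started from `μ₀`, targetting `μ ∝ e^{-f}`. -/
def mixingTime {d : ℕ} (f : Euc d → ℝ) (K : ℕ) (η : ℝ) (μ0 : Measure (Euc d)) (ε : ℝ) : ℕ :=
  sInf { n : ℕ | tvDist (hmcIter f K η μ0 n) (targetMeasure f) ≤ ε }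

/-- `μ₀` is `M`-warm with respect to `μ`. -/
def Warm {α : Type*} [MeasurableSpace α] (μ0 μ : Measure α) (M : ℝ) : Prop :=
  ∀ S : Set α, MeasurableSet S → μ0 S ≤ ENNReal.ofReal M * μ S

/-- `e^{-f}` has subexponential tail. -/
def SubexpTail {d : ℕ} (f : Euc d → ℝ) : Prop :=
  ∃ lam > (0:ℝ), Filter.Tendsto (fun x : Euc d => Real.exp (lam * ‖x‖) * Real.exp (-f x))
    (Bornology.cobounded _) (nhds 0)

end

/-!
Differentiating the leapfrog recursion in the initial momentum gives the same kind of recursion for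
the Jacobians `(∂q_j/∂p, ∂p_j/∂p)`, linearised along the trajectory, and unrolling it gives the
discrete Duhamel formula (i). Feeding `‖∇²f‖ ≤ L` into (i), a strong induction on `j` shows
`‖∂q_j/∂p - jη I‖ ≤ j³η³L`, which is at most `Kη/16` at `j = K` because `K²η²L ≤ 1/16`.
So the derivative of `p ↦ q_K` stays within `Kη/16` of `Kη I` everywhere; by the mean value
inequality the map approximates `Kη I` globally, hence is a bijection, and its inverse has
derivative `(∂q_K/∂p)⁻¹`, which stretches every vector by a factor in `[16/(17Kη), 16/(15Kη)]`.
Such two-sided bounds confine the moduli of the complex eigenvalues of a real matrix `T`: if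
`a + i b` is an eigenvector for `z`, then `‖Ta‖² + ‖Tb‖² = |z|² (‖a‖² + ‖b‖²)`.
-/

open Finset Function

/-- `(∂q_j/∂p₀, ∂p_j/∂p₀)` for the leapfrog iterates, when `H l` is the Hessian of the potential
at `q_l`. -/
noncomputable def leapfrogJacobian {R : Type*} [Ring R] [Algebra ℝ R] (η : ℝ) (H : ℕ → R) :
    ℕ → R × R
  | 0 => (0, 1)
  | j + 1 =>
    let A := (leapfrogJacobian η H j).1
    let B := (leapfrogJacobian η H j).2
    let A' := A + η • B - (η ^ 2 / 2) • (H j * A)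
    (A', B - (η / 2) • (H j * A) - (η / 2) • (H (j + 1) * A'))

section Jacobian

variable {R : Type*} [Ring R] [Algebra ℝ R] (η : ℝ) (H : ℕ → R)

theorem leapfrogJacobian_eq_sum (j : ℕ) :
    (leapfrogJacobian η H j).1 = ((j : ℝ) * η) • 1
      - η ^ 2 • ∑ l ∈ range j, ((j : ℝ) - l) • (H l * (leapfrogJacobian η H l).1) ∧
    (leapfrogJacobian η H j).2 = 1 - (η / 2) • (H j * (leapfrogJacobian η H j).1)
      - η • ∑ l ∈ range j, H l * (leapfrogJacobian η H l).1 := by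
  induction j with
  | zero => simp [leapfrogJacobian]
  | succ j ih =>
    set C := fun l => H l * (leapfrogJacobian η H l).1
    have hshift : ∑ l ∈ range j, (((j + 1 : ℕ) : ℝ) - l) • C l
        = ∑ l ∈ range j, ((j : ℝ) - l) • C l + ∑ l ∈ range j, C l := by
      rw [← sum_add_distrib]
      exact sum_congr rfl fun l _ => by push_cast; module
    change (leapfrogJacobian η H j).1 + η • (leapfrogJacobian η H j).2 - (η ^ 2 / 2) • C j = _ ∧
      (leapfrogJacobian η H j).2 - (η / 2) • C j - (η / 2) • C (j + 1) = _
    rw [sum_range_succ, sum_range_succ, hshift, ih.2]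
    nth_rw 1 [ih.1]
    simp only [C]
    constructor <;> push_cast <;> module

theorem leapfrogJacobian_fst_eq_sum_Ico (j : ℕ) :
    (leapfrogJacobian η H j).1 = ((j : ℝ) * η) • 1
      - η ^ 2 • ∑ l ∈ Ico 1 j, ((j : ℝ) - l) • (H l * (leapfrogJacobian η H l).1) := by
  rcases Nat.eq_zero_or_pos j with rfl | hj
  · simp [leapfrogJacobian]
  · rw [(leapfrogJacobian_eq_sum η H j).1, sum_range_eq_add_Ico _ hj]
    simp [leapfrogJacobian]

end Jacobian

theorem norm_leapfrogJacobian_fst_sub_le {E : Type*} [NormedAddCommGroup E] [NormedSpace ℝ E]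
    {η L : ℝ} {H : ℕ → E →L[ℝ] E} (hη : 0 ≤ η) (hH : ∀ l, ‖H l‖ ≤ L) {j : ℕ}
    (hj : (j : ℝ) ^ 2 * η ^ 2 * L ≤ 1 / 16) :
    ‖(leapfrogJacobian η H j).1 - ((j : ℝ) * η) • 1‖ ≤ (j : ℝ) ^ 3 * η ^ 3 * L := by
  induction j using Nat.strong_induction_on with
  | _ j ih =>
  have hL : 0 ≤ L := (norm_nonneg _).trans (hH 0)
  have hA : ∀ l < j, ‖(leapfrogJacobian η H l).1‖ ≤ 2 * l * η := by
    intro l hl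
    have hlj : (l : ℝ) ≤ j := by exact_mod_cast hl.le
    have hsmall : (l : ℝ) ^ 2 * η ^ 2 * L ≤ 1 / 16 :=
      le_trans (by gcongr) hj
    have hcube : (l : ℝ) ^ 3 * η ^ 3 * L ≤ l * η := by
      have : 0 ≤ (l : ℝ) * η := by positivity
      nlinarith
    calc ‖(leapfrogJacobian η H l).1‖
        ≤ ‖(leapfrogJacobian η H l).1 - ((l : ℝ) * η) • 1‖ + ‖((l : ℝ) * η) • (1 : E →L[ℝ] E)‖ :=
          norm_le_norm_sub_add _ _
      _ ≤ l * η + l * η := by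
          gcongr
          · exact (ih l hl hsmall).trans hcube
          · rw [norm_smul, Real.norm_of_nonneg (by positivity)]
            exact mul_le_of_le_one_right (by positivity) ContinuousLinearMap.norm_id_le
      _ = 2 * l * η := by ring
  have hterm : ∀ l ∈ range j,
      ‖((j : ℝ) - l) • (H l * (leapfrogJacobian η H l).1)‖ ≤ (j : ℝ) ^ 2 * η * L / 2 := by
    intro l hl
    have hlj : l < j := mem_range.mp hl
    have hjl : (0 : ℝ) ≤ j - l := by
      have : (l : ℝ) ≤ j := by exact_mod_cast hlj.le
      linarith
    calc ‖((j : ℝ) - l) • (H l * (leapfrogJacobian η H l).1)‖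
        ≤ (j - l) * (L * (2 * l * η)) := by
          rw [norm_smul, Real.norm_eq_abs, abs_of_nonneg hjl]
          gcongr
          exact (norm_mul_le _ _).trans (mul_le_mul (hH l) (hA l hlj) (norm_nonneg _) hL)
      _ ≤ (j : ℝ) ^ 2 * η * L / 2 := by
          nlinarith [sq_nonneg ((j : ℝ) - 2 * l), mul_nonneg hL hη]
  calc ‖(leapfrogJacobian η H j).1 - ((j : ℝ) * η) • 1‖
      = η ^ 2 * ‖∑ l ∈ range j, ((j : ℝ) - l) • (H l * (leapfrogJacobian η H l).1)‖ := by
        rw [(leapfrogJacobian_eq_sum η H j).1, sub_sub_cancel_left, norm_neg, norm_smul,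
          Real.norm_of_nonneg (by positivity)]
    _ ≤ η ^ 2 * (j * ((j : ℝ) ^ 2 * η * L / 2)) := by
        gcongr
        simpa using norm_sum_le_of_le _ hterm
    _ ≤ (j : ℝ) ^ 3 * η ^ 3 * L := by
        have : 0 ≤ (j : ℝ) ^ 3 * η ^ 3 * L := by positivity
        nlinarith

theorem contDiff_gradient {F : Type*} [NormedAddCommGroup F] [InnerProductSpace ℝ F]
    [CompleteSpace F] {f : F → ℝ} {m n : WithTop ℕ∞} (hf : ContDiff ℝ n f) (hmn : m + 1 ≤ n) :
    ContDiff ℝ m (gradient f) :=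
  (InnerProductSpace.toDual ℝ F).symm.contDiff.comp (hf.fderiv_right hmn)

noncomputable def hessianAlongLeapfrog {d : ℕ} (f : Euc d → ℝ) (η : ℝ) (z : Euc d × Euc d)
    (l : ℕ) : Euc d →L[ℝ] Euc d :=
  fderiv ℝ (gradient f) (leapfrog f η l z).1

theorem hasStrictFDerivAt_leapfrog {d : ℕ} {f : Euc d → ℝ} (hf : ContDiff ℝ 2 f) (η : ℝ)
    (q p : Euc d) (j : ℕ) :
    HasStrictFDerivAt (fun p' => (leapfrog f η j (q, p')).1)
      (leapfrogJacobian η (hessianAlongLeapfrog f η (q, p)) j).1 p ∧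
    HasStrictFDerivAt (fun p' => (leapfrog f η j (q, p')).2)
      (leapfrogJacobian η (hessianAlongLeapfrog f η (q, p)) j).2 p := by
  have hgrad : ∀ x, HasStrictFDerivAt (gradient f) (fderiv ℝ (gradient f) x) x := fun x =>
    ((contDiff_gradient hf le_rfl).contDiffAt).hasStrictFDerivAt one_ne_zero
  induction j with
  | zero => exact ⟨hasStrictFDerivAt_const q p, hasStrictFDerivAt_id p⟩
  | succ j ih =>
    have hq := (ih.1.add (ih.2.const_smul η)).sub (((hgrad _).comp p ih.1).const_smul (η ^ 2 / 2))
    refine ⟨hq, ?_⟩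
    exact (ih.2.sub (((hgrad _).comp p ih.1).const_smul (η / 2))).sub
      (((hgrad _).comp p hq).const_smul (η / 2))

theorem fderiv_leapfrog_fst {d : ℕ} {f : Euc d → ℝ} (hf : ContDiff ℝ 2 f) (η : ℝ)
    (q p : Euc d) (j : ℕ) :
    fderiv ℝ (fun p' => (leapfrog f η j (q, p')).1) p
      = (leapfrogJacobian η (hessianAlongLeapfrog f η (q, p)) j).1 :=
  (hasStrictFDerivAt_leapfrog hf η q p j).1.hasFDerivAt.fderiv

theorem norm_fderiv_leapfrog_fst_sub_le {d : ℕ} {f : Euc d → ℝ} {L η : ℝ} (hf : ContDiff ℝ 2 f)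
    (hL : LSmooth f L) (hη : 0 ≤ η) {j : ℕ} (hj : (j : ℝ) ^ 2 * η ^ 2 * L ≤ 1 / 16)
    (q p : Euc d) :
    ‖fderiv ℝ (fun p' => (leapfrog f η j (q, p')).1) p
      - ((j : ℝ) * η) • ContinuousLinearMap.id ℝ (Euc d)‖ ≤ (j : ℝ) ^ 3 * η ^ 3 * L := by
  rw [fderiv_leapfrog_fst hf]
  exact norm_leapfrogJacobian_fst_sub_le hη (fun l => hL _) hj

section NearScalar

variable {E : Type*} [NormedAddCommGroup E] [NormedSpace ℝ E]

theorem ContinuousLinearMap.norm_apply_le_of_norm_sub_smul_id_le {A : E →L[ℝ] E} {c ε : ℝ}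
    (hA : ‖A - c • ContinuousLinearMap.id ℝ E‖ ≤ ε) (x : E) :
    (|c| - ε) * ‖x‖ ≤ ‖A x‖ ∧ ‖A x‖ ≤ (|c| + ε) * ‖x‖ := by
  have hdiff : ‖A x - c • x‖ ≤ ε * ‖x‖ :=
    ((A - c • ContinuousLinearMap.id ℝ E).le_opNorm x).trans (by gcongr)
  have hcx : ‖c • x‖ = |c| * ‖x‖ := by rw [norm_smul, Real.norm_eq_abs]
  constructor
  · nlinarith [norm_sub_norm_le (c • x) (A x), norm_sub_rev (c • x) (A x)]
  · nlinarith [norm_le_norm_sub_add (A x) (c • x)]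

variable [FiniteDimensional ℝ E]

theorem bijective_of_hasFDerivAt_near_smul_id {φ : E → E} {A : E → E →L[ℝ] E} {c ε : ℝ}
    (hε : ε < c) (hφ : ∀ p, HasFDerivAt φ (A p) p)
    (hA : ∀ p, ‖A p - c • ContinuousLinearMap.id ℝ E‖ ≤ ε) : Bijective φ := by
  have hε0 : 0 ≤ ε := (norm_nonneg _).trans (hA 0)
  have hc : 0 < c := hε0.trans_lt hε
  set u : E ≃L[ℝ] E := ContinuousLinearEquiv.smulLeft (Units.mk0 c hc.ne')
  have hu : (u : E →L[ℝ] E) = c • ContinuousLinearMap.id ℝ E := rfl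
  have happrox : ApproximatesLinearOn φ (u : E →L[ℝ] E) Set.univ ε.toNNReal := fun x _ y _ => by
    rw [Real.coe_toNNReal _ hε0]
    exact convex_univ.norm_image_sub_le_of_norm_hasFDerivWithin_le'
      (fun p _ => (hφ p).hasFDerivWithinAt) (fun p _ => hu ▸ hA p) (Set.mem_univ y) (Set.mem_univ x)
  have hsmall : Subsingleton E ∨ ε.toNNReal < ‖(u.symm : E →L[ℝ] E)‖₊⁻¹ := by
    rcases subsingleton_or_nontrivial E with h | h
    · exact Or.inl h
    · right
      have : ‖(u.symm : E →L[ℝ] E)‖ = c⁻¹ := by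
        change ‖c⁻¹ • ContinuousLinearMap.id ℝ E‖ = c⁻¹
        rw [norm_smul, ContinuousLinearMap.norm_id, mul_one, Real.norm_of_nonneg (by positivity)]
      rw [← NNReal.coe_lt_coe, Real.coe_toNNReal _ hε0, NNReal.coe_inv, coe_nnnorm, this, inv_inv]
      exact hε
  exact ⟨fun x y hxy => happrox.injOn hsmall (Set.mem_univ x) (Set.mem_univ y) hxy,
    happrox.surjective hsmall⟩

theorem exists_inverse_of_hasStrictFDerivAt_near_smul_id {φ : E → E} {A : E → E →L[ℝ] E}
    {c ε : ℝ} (hε : ε < c) (hφ : ∀ p, HasStrictFDerivAt φ (A p) p)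
    (hA : ∀ p, ‖A p - c • ContinuousLinearMap.id ℝ E‖ ≤ ε) :
    ∃ G : E → E, LeftInverse G φ ∧ RightInverse G φ ∧
      ∀ y x, (c + ε)⁻¹ * ‖x‖ ≤ ‖fderiv ℝ G y x‖ ∧ ‖fderiv ℝ G y x‖ ≤ (c - ε)⁻¹ * ‖x‖ := by
  have hε0 : 0 ≤ ε := (norm_nonneg _).trans (hA 0)
  have hbij := bijective_of_hasFDerivAt_near_smul_id hε (fun p => (hφ p).hasFDerivAt) hA
  set e := Equiv.ofBijective φ hbij
  refine ⟨e.symm, e.left_inv, e.right_inv, fun y x => ?_⟩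
  obtain ⟨p, rfl⟩ := hbij.surjective y
  have hAp := fun x => ContinuousLinearMap.norm_apply_le_of_norm_sub_smul_id_le (hA p) x
  rw [abs_of_pos (hε0.trans_lt hε)] at hAp
  have hinj : Injective (A p) := (injective_iff_map_eq_zero _).2 fun x hx => by
    have := (hAp x).1
    rw [hx, norm_zero] at this
    exact norm_le_zero_iff.1 (nonpos_of_mul_nonpos_right this (by linarith))
  set A' : E ≃L[ℝ] E :=
    (LinearEquiv.ofInjectiveEndo (A p : E →ₗ[ℝ] E) hinj).toContinuousLinearEquiv
  have hG : HasStrictFDerivAt e.symm (A'.symm : E →L[ℝ] E) (φ p) :=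
    HasStrictFDerivAt.to_local_left_inverse (f' := A') (hφ p) (.of_forall e.left_inv)
  rw [hG.hasFDerivAt.fderiv]
  obtain ⟨hlo, hhi⟩ := hAp (A'.symm x)
  rw [show A p (A'.symm x) = x from A'.apply_symm_apply x] at hlo hhi
  constructor
  · rw [inv_mul_le_iff₀ (by linarith)]
    exact hhi
  · rw [le_inv_mul_iff₀ (by linarith)]
    exact hlo

end NearScalar

section Spectrum

open Matrix Complex

variable {ι : Type*} [Fintype ι] [DecidableEq ι]

theorem LinearMap.matrix_of_apply_single_mulVec (T : EuclideanSpace ℝ ι →ₗ[ℝ] EuclideanSpace ℝ ι)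
    (w : ι → ℝ) :
    (Matrix.of fun i j => T (EuclideanSpace.single j 1) i) *ᵥ w = T (WithLp.toLp 2 w) := by
  have hw : WithLp.toLp 2 w = ∑ j, w j • EuclideanSpace.single j (1 : ℝ) := by
    simpa using ((EuclideanSpace.basisFun ι ℝ).sum_repr (WithLp.toLp 2 w)).symm
  rw [hw, map_sum]
  ext i
  simp [Matrix.mulVec, dotProduct, mul_comm]

theorem Matrix.exists_mulVec_eq_smul_of_mem_spectrum {K : Type*} [Field K] {M : Matrix ι ι K}
    {z : K} (hz : z ∈ spectrum K M) : ∃ v ≠ 0, M *ᵥ v = z • v := by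
  rw [← Matrix.spectrum_toLin', ← Module.End.hasEigenvalue_iff_mem_spectrum] at hz
  obtain ⟨v, hv⟩ := hz.exists_hasEigenvector
  exact ⟨v, hv.2, by simpa using hv.apply_eq_smul⟩

theorem LinearMap.exists_norm_sq_add_norm_sq_eq_of_mem_spectrum
    (T : EuclideanSpace ℝ ι →ₗ[ℝ] EuclideanSpace ℝ ι) {z : ℂ}
    (hz : z ∈ spectrum ℂ ((Matrix.of fun i j => T (EuclideanSpace.single j 1) i).map ofReal)) :
    ∃ a b : EuclideanSpace ℝ ι, 0 < ‖a‖ ^ 2 + ‖b‖ ^ 2 ∧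
      ‖T a‖ ^ 2 + ‖T b‖ ^ 2 = ‖z‖ ^ 2 * (‖a‖ ^ 2 + ‖b‖ ^ 2) := by
  obtain ⟨v, hv0, hv⟩ := Matrix.exists_mulVec_eq_smul_of_mem_spectrum hz
  set a : EuclideanSpace ℝ ι := WithLp.toLp 2 fun j => (v j).re
  set b : EuclideanSpace ℝ ι := WithLp.toLp 2 fun j => (v j).im
  have hcoord : ∀ i, (T a i : ℂ) + T b i * I = z * v i := fun i => by
    rw [← T.matrix_of_apply_single_mulVec, ← T.matrix_of_apply_single_mulVec,
      show z * v i = (z • v) i from rfl, ← hv]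
    apply Complex.ext <;> simp [Matrix.mulVec, dotProduct, Complex.re_sum, Complex.im_sum]
  have hsq : ∀ i, T a i ^ 2 + T b i ^ 2 = ‖z‖ ^ 2 * (a i ^ 2 + b i ^ 2) := fun i => by
    have := congrArg normSq (hcoord i)
    rw [normSq_add_mul_I, normSq_mul, normSq_eq_norm_sq, normSq_apply] at this
    change _ = ‖z‖ ^ 2 * ((v i).re ^ 2 + (v i).im ^ 2)
    rw [this]
    ring
  obtain ⟨i, hi⟩ := Function.ne_iff.mp hv0
  refine ⟨a, b, ?_, ?_⟩
  · simp only [EuclideanSpace.real_norm_sq_eq, ← Finset.sum_add_distrib]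
    refine Finset.sum_pos' (fun j _ => by positivity) ⟨i, Finset.mem_univ i, ?_⟩
    have := normSq_pos.mpr hi
    rw [normSq_apply] at this
    simp only [a, b]
    nlinarith
  · simp only [EuclideanSpace.real_norm_sq_eq, ← Finset.sum_add_distrib, hsq, Finset.mul_sum]

theorem LinearMap.norm_le_of_mem_spectrum (T : EuclideanSpace ℝ ι →ₗ[ℝ] EuclideanSpace ℝ ι)
    {C : ℝ} (hT : ∀ x, ‖T x‖ ≤ C * ‖x‖) {z : ℂ}
    (hz : z ∈ spectrum ℂ ((Matrix.of fun i j => T (EuclideanSpace.single j 1) i).map ofReal)) :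
    ‖z‖ ≤ C := by
  obtain ⟨a, b, hpos, heq⟩ := T.exists_norm_sq_add_norm_sq_eq_of_mem_spectrum hz
  have ha := (norm_nonneg _).trans (hT a)
  have hb := (norm_nonneg _).trans (hT b)
  have hC : 0 ≤ C := by
    by_contra! hC
    nlinarith [norm_nonneg a, norm_nonneg b, mul_nonneg (norm_nonneg a) (norm_nonneg b)]
  refine le_of_pow_le_pow_left₀ two_ne_zero hC (le_of_mul_le_mul_right ?_ hpos)
  rw [← heq]
  nlinarith [pow_le_pow_left₀ (norm_nonneg _) (hT a) 2, pow_le_pow_left₀ (norm_nonneg _) (hT b) 2]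

theorem LinearMap.le_norm_of_mem_spectrum (T : EuclideanSpace ℝ ι →ₗ[ℝ] EuclideanSpace ℝ ι)
    {m : ℝ} (hT : ∀ x, m * ‖x‖ ≤ ‖T x‖) {z : ℂ}
    (hz : z ∈ spectrum ℂ ((Matrix.of fun i j => T (EuclideanSpace.single j 1) i).map ofReal)) :
    m ≤ ‖z‖ := by
  obtain ⟨a, b, hpos, heq⟩ := T.exists_norm_sq_add_norm_sq_eq_of_mem_spectrum hz
  rcases le_or_gt m 0 with hm | hm
  · exact hm.trans (norm_nonneg z)
  refine le_of_pow_le_pow_left₀ two_ne_zero (norm_nonneg z) (le_of_mul_le_mul_right ?_ hpos)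
  rw [← heq]
  have ha := pow_le_pow_left₀ (by positivity) (hT a) 2
  have hb := pow_le_pow_left₀ (by positivity) (hT b) 2
  nlinarith

end Spectrum

/-- **Lemma (Jacobian of the leapfrog position map in the momentum variable).** -/
theorem leapfrog_momentum_jacobian {d : ℕ} (f : Euc d → ℝ) (L η : ℝ) (K : ℕ)
    (hf : ContDiff ℝ 2 f) (hL : LSmooth f L) (hK : 1 ≤ K) (hη : 0 < η)
    (hstep : (K : ℝ) * η * L ^ ((1:ℝ)/2) ≤ 1/4) :
    -- the position map and its Jacobian in `p`
    let F : ℕ → Euc d → Euc d → Euc d := fun j q p => (leapfrog f η j (q, p)).1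
    let D2F : ℕ → Euc d → Euc d → (Euc d →L[ℝ] Euc d) :=
      fun j q p => fderiv ℝ (fun p' => F j q p') p
    -- (i) recursion formula
    (∀ j, 1 ≤ j → j ≤ K → ∀ q p : Euc d,
      D2F j q p = ((j : ℝ) * η) • ContinuousLinearMap.id ℝ (Euc d)
        - η^2 • ∑ l ∈ Finset.Ico 1 j,
            ((j : ℝ) - (l : ℝ)) • ((fderiv ℝ (gradient f) (F l q p)).comp (D2F l q p))) ∧
    -- (ii) operator norm bound
    (∀ j, 1 ≤ j → j ≤ K → ∀ q p : Euc d,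
      ‖D2F j q p - ((j : ℝ) * η) • ContinuousLinearMap.id ℝ (Euc d)‖
        ≤ (j : ℝ)^3 * η^3 * L) ∧
    (∀ q p : Euc d,
      ‖D2F K q p - ((K : ℝ) * η) • ContinuousLinearMap.id ℝ (Euc d)‖ ≤ (K : ℝ) * η / 16) ∧
    -- invertibility of `p ↦ F K q p` and eigenvalue bounds on the inverse's Jacobian
    (∃ G : Euc d → Euc d → Euc d,
      (∀ q p : Euc d, G q (F K q p) = p) ∧
      (∀ q y : Euc d, F K q (G q y) = y) ∧
      (∀ q y : Euc d,
        ∀ z ∈ spectrum ℂ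
          ((Matrix.of fun i j : Fin d =>
              (fderiv ℝ (G q) y) (EuclideanSpace.single j 1) i).map Complex.ofReal),
          16 / (17 * (K : ℝ) * η) ≤ ‖z‖ ∧
          ‖z‖ ≤ 16 / (15 * (K : ℝ) * η))) := by
  intro F D2F
  have hL0 : 0 ≤ L := (norm_nonneg _).trans (hL 0)
  have hKη : 0 < (K : ℝ) * η := mul_pos (by exact_mod_cast hK) hη
  have hsmall : (K : ℝ) ^ 2 * η ^ 2 * L ≤ 1 / 16 := by
    rw [← Real.sqrt_eq_rpow] at hstep
    have := pow_le_pow_left₀ (by positivity) hstep 2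
    rw [mul_pow, mul_pow, Real.sq_sqrt hL0] at this
    linarith
  have hbound : ∀ j ≤ K, ∀ q p, ‖D2F j q p - ((j : ℝ) * η) • ContinuousLinearMap.id ℝ (Euc d)‖
      ≤ (j : ℝ) ^ 3 * η ^ 3 * L := fun j hj =>
    norm_fderiv_leapfrog_fst_sub_le hf hL hη.le (le_trans (by gcongr) hsmall)
  have hK16 : ∀ q p,
      ‖D2F K q p - ((K : ℝ) * η) • ContinuousLinearMap.id ℝ (Euc d)‖ ≤ (K : ℝ) * η / 16 :=
    fun q p => (hbound K le_rfl q p).trans (by nlinarith [mul_le_mul_of_nonneg_left hsmall hKη.le])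
  refine ⟨fun j _ _ q p => ?_, fun j _ hj => hbound j hj, hK16, ?_⟩
  · simp only [D2F, F, fderiv_leapfrog_fst hf]
    exact leapfrogJacobian_fst_eq_sum_Ico η _ j
  choose G hGF hFG hG using fun q => exists_inverse_of_hasStrictFDerivAt_near_smul_id
    (by linarith : (K : ℝ) * η / 16 < K * η)
    (fun p => fderiv_leapfrog_fst hf η q p K ▸ (hasStrictFDerivAt_leapfrog hf η q p K).1) (hK16 q)
  refine ⟨G, hGF, hFG, fun q y z hz => ⟨?_, ?_⟩⟩
  · calc 16 / (17 * (K : ℝ) * η) = ((K : ℝ) * η + K * η / 16)⁻¹ := by field_simp; ring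
      _ ≤ ‖z‖ := (fderiv ℝ (G q) y : Euc d →ₗ[ℝ] Euc d).le_norm_of_mem_spectrum
          (fun x => (hG q y x).1) hz
  · calc ‖z‖ ≤ ((K : ℝ) * η - K * η / 16)⁻¹ :=
          (fderiv ℝ (G q) y : Euc d →ₗ[ℝ] Euc d).norm_le_of_mem_spectrum (fun x => (hG q y x).2) hz
      _ = 16 / (15 * (K : ℝ) * η) := by field_simp; ring
end

section
/- Let f : ℝ^d → ℝ be differentiable and L-smooth, and let K ≥ 1, η > 0 satisfy K η L^{1/2} ≤ 1/2. For each j ∈ {1,…,K}, let 𝔽_j(q,p) := q_j be the position after j leapfrog steps with step size η started at (q,p). Then for all q, q̃, p, p̃ ∈ ℝ^d and 1 ≤ j ≤ K, ‖𝔽_j(q,p) − 𝔽_j(q̃,p̃)‖ ≤ 2‖q − q̃‖ + 2 j η ‖p − p̃‖. -/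
open MeasureTheory Real
open scoped ENNReal NNReal

private lemma lf_succ_fst {d : ℕ} (f : Euc d → ℝ) (η : ℝ) (k : ℕ) (z : Euc d × Euc d) :
    (leapfrog f η (k+1) z).1 = (leapfrog f η k z).1 + η • (leapfrog f η k z).2
      - (η^2/2) • gradient f (leapfrog f η k z).1 := rfl

private lemma lf_succ_snd {d : ℕ} (f : Euc d → ℝ) (η : ℝ) (k : ℕ) (z : Euc d × Euc d) :
    (leapfrog f η (k+1) z).2 = (leapfrog f η k z).2 - (η/2) • gradient f (leapfrog f η k z).1
      - (η/2) • gradient f (leapfrog f η (k+1) z).1 := rfl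

private lemma norm_step1 {E : Type*} [NormedAddCommGroup E] [NormedSpace ℝ E]
    (a a' b b' u u' : E) (η c : ℝ) :
    ‖(a + η•b - c•u) - (a' + η•b' - c•u')‖ ≤ ‖a-a'‖ + |η| * ‖b-b'‖ + |c| * ‖u-u'‖ := by
  have h : (a + η•b - c•u) - (a' + η•b' - c•u') = ((a-a') + η•(b-b')) - c•(u-u') := by
    module
  rw [h]
  refine (norm_sub_le _ _).trans ?_
  have h2 := norm_add_le (a-a') (η•(b-b'))
  simp only [norm_smul, Real.norm_eq_abs] at h2 ⊢
  linarith

private lemma norm_step2 {E : Type*} [NormedAddCommGroup E] [NormedSpace ℝ E]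
    (b b' u u' v v' : E) (c : ℝ) :
    ‖(b - c•u - c•v) - (b' - c•u' - c•v')‖ ≤ ‖b-b'‖ + |c| * ‖u-u'‖ + |c| * ‖v-v'‖ := by
  have h : (b - c•u - c•v) - (b' - c•u' - c•v') = ((b-b') - c•(u-u')) - c•(v-v') := by
    module
  rw [h]
  refine (norm_sub_le _ _).trans ?_
  have h2 := norm_sub_le (b-b') (c•(u-u'))
  simp only [norm_smul, Real.norm_eq_abs] at h2 ⊢
  linarith


private lemma seq_bound (X Yp : ℕ → ℝ) (s A Y : ℝ) (K : ℕ)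
    (hs0 : 0 ≤ s) (hA : 0 ≤ A) (hY : 0 ≤ Y) (hKs : (K:ℝ) * s ≤ 1/2)
    (hX0 : X 0 = A) (hY0 : Yp 0 = Y)
    (hx : ∀ k, X (k+1) ≤ (1 + s^2/2) * X k + Yp k)
    (hy : ∀ k, Yp (k+1) ≤ Yp k + (s^2/2) * (X k + X (k+1))) :
    ∀ k : ℕ, k ≤ K →
      X k ≤ (A + (k:ℝ) * Y) * (1 + ((k:ℝ)*s)^2)
      ∧ Yp k ≤ Y + 2 * (k:ℝ) * s^2 * (A + (k:ℝ) * Y) := by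
  intro k
  induction k with
  | zero => intro _; constructor <;> simp [hX0, hY0]
  | succ k ih =>
    intro hk1
    have hkK : ((k:ℝ)+1) ≤ K := by exact_mod_cast hk1
    have hk0 : (0:ℝ) ≤ (k:ℝ) := Nat.cast_nonneg k
    have hks1 : ((k:ℝ)+1)*s ≤ 1/2 := le_trans (mul_le_mul_of_nonneg_right hkK hs0) hKs
    have hks : (k:ℝ)*s ≤ 1/2 := by nlinarith
    have hC0 : (0:ℝ) ≤ A + (k:ℝ)*Y := by positivity
    have hC0' : (0:ℝ) ≤ A + ((k:ℝ)+1)*Y := by positivity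
    have hu0 : (0:ℝ) ≤ (k:ℝ)*s := by positivity
    have hu1 : ((k:ℝ)*s)^2 ≤ 1/4 := by nlinarith
    have hus1 : ((k:ℝ)*s+s)^2 ≤ 1/4 := by nlinarith
    have hcoef : (0:ℝ) ≤ (A + (k:ℝ)*Y) * (s^2/2 * (1 - ((k:ℝ)*s)^2)) :=
      mul_nonneg hC0 (by nlinarith)
    obtain ⟨ihx, ihy⟩ := ih (Nat.le_of_succ_le hk1)
    have hxk := hx k
    have hyk := hy k
    have hP : X (k+1) ≤ (A + ((k:ℝ)+1)*Y) * (1 + (((k:ℝ)+1)*s)^2) := by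
      have h1 : (1 + s^2/2) * X k ≤ (1 + s^2/2) * ((A + (k:ℝ)*Y) * (1 + ((k:ℝ)*s)^2)) :=
        mul_le_mul_of_nonneg_left ihx (by positivity)
      linarith [hxk, h1, ihy, hcoef,
        mul_nonneg (mul_nonneg hY (by positivity : (0:ℝ) ≤ (k:ℝ)*s+s))
          (by positivity : (0:ℝ) ≤ (k:ℝ)*s+s)]
    constructor
    · push_cast
      exact hP
    · have hxkb : X k ≤ 2*(A + (k:ℝ)*Y) := by
        linarith [ihx, mul_le_mul_of_nonneg_left hu1 hC0]
      have hxk1b : X (k+1) ≤ 2*(A + ((k:ℝ)+1)*Y) := by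
        linarith [hP, mul_le_mul_of_nonneg_left hus1 hC0']
      push_cast
      linarith [hyk, ihy, mul_nonneg (sq_nonneg s) hY,
        mul_nonneg (mul_nonneg hk0 (sq_nonneg s)) hY,
        mul_le_mul_of_nonneg_left hxkb (by positivity : (0:ℝ) ≤ s^2/2),
        mul_le_mul_of_nonneg_left hxk1b (by positivity : (0:ℝ) ≤ s^2/2)]

/-- **Lemma (joint Lipschitz bound for the leapfrog position map).** -/
theorem leapfrog_position_lipschitz {d : ℕ} (f : Euc d → ℝ) (L η : ℝ) (K : ℕ)
    (hf : Differentiable ℝ f)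
    (hL : ∀ x y : Euc d, ‖gradient f x - gradient f y‖ ≤ L * ‖x - y‖)
    (hK : 1 ≤ K) (hη : 0 < η)
    (hstep : (K : ℝ) * η * L ^ ((1:ℝ)/2) ≤ 1/2) :
    ∀ j, 1 ≤ j → j ≤ K → ∀ q q' p p' : Euc d,
      ‖(leapfrog f η j (q, p)).1 - (leapfrog f η j (q', p')).1‖
        ≤ 2 * ‖q - q'‖ + 2 * (j : ℝ) * η * ‖p - p'‖ := by
  intro j hj1 hjK q q' p p'
  rcases subsingleton_or_nontrivial (Euc d) with hss | hnt
  · have h0 : (leapfrog f η j (q,p)).1 = (leapfrog f η j (q',p')).1 := Subsingleton.elim _ _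
    rw [h0, sub_self, norm_zero]
    positivity
  have hL0 : 0 ≤ L := by
    obtain ⟨v, hv⟩ := exists_ne (0 : Euc d)
    have h1 := hL v 0
    have h2 : 0 < ‖v - (0:Euc d)‖ := by simpa [sub_zero] using norm_pos_iff.mpr hv
    nlinarith [norm_nonneg (gradient f v - gradient f 0)]
  set s : ℝ := η * Real.sqrt L with hs_def
  have hs0 : 0 ≤ s := mul_nonneg hη.le (Real.sqrt_nonneg L)
  have hs2 : s^2 = η^2 * L := by rw [hs_def, mul_pow, Real.sq_sqrt hL0]
  have hKs : (K : ℝ) * s ≤ 1/2 := by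
    rw [hs_def, ← mul_assoc]
    rwa [← Real.sqrt_eq_rpow] at hstep
  have hA : (0:ℝ) ≤ ‖q - q'‖ := norm_nonneg _
  have hY : (0:ℝ) ≤ η * ‖p - p'‖ := by positivity
  -- one-step recursions
  have hx : ∀ k : ℕ,
      ‖(leapfrog f η (k+1) (q,p)).1 - (leapfrog f η (k+1) (q',p')).1‖
        ≤ (1 + s^2/2) * ‖(leapfrog f η k (q,p)).1 - (leapfrog f η k (q',p')).1‖
          + η * ‖(leapfrog f η k (q,p)).2 - (leapfrog f η k (q',p')).2‖ := by
    intro k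
    rw [lf_succ_fst, lf_succ_fst]
    refine (norm_step1 _ _ _ _ _ _ η (η^2/2)).trans ?_
    have hg := hL (leapfrog f η k (q,p)).1 (leapfrog f η k (q',p')).1
    have hη2 : |η^2/2| = η^2/2 := abs_of_nonneg (by positivity)
    have hηa : |η| = η := abs_of_pos hη
    rw [hη2, hηa]
    nlinarith [norm_nonneg ((leapfrog f η k (q,p)).1 - (leapfrog f η k (q',p')).1), sq_nonneg η]
  have hy : ∀ k : ℕ,
      η * ‖(leapfrog f η (k+1) (q,p)).2 - (leapfrog f η (k+1) (q',p')).2‖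
        ≤ η * ‖(leapfrog f η k (q,p)).2 - (leapfrog f η k (q',p')).2‖
          + (s^2/2) * (‖(leapfrog f η k (q,p)).1 - (leapfrog f η k (q',p')).1‖
            + ‖(leapfrog f η (k+1) (q,p)).1 - (leapfrog f η (k+1) (q',p')).1‖) := by
    intro k
    have hb : ‖(leapfrog f η (k+1) (q,p)).2 - (leapfrog f η (k+1) (q',p')).2‖
        ≤ ‖(leapfrog f η k (q,p)).2 - (leapfrog f η k (q',p')).2‖
          + (η/2) * (L * ‖(leapfrog f η k (q,p)).1 - (leapfrog f η k (q',p')).1‖)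
          + (η/2) * (L * ‖(leapfrog f η (k+1) (q,p)).1 - (leapfrog f η (k+1) (q',p')).1‖) := by
      rw [lf_succ_snd, lf_succ_snd]
      refine (norm_step2 _ _ _ _ _ _ (η/2)).trans ?_
      have hg1 := hL (leapfrog f η k (q,p)).1 (leapfrog f η k (q',p')).1
      have hg2 := hL (leapfrog f η (k+1) (q,p)).1 (leapfrog f η (k+1) (q',p')).1
      have hηa : |η/2| = η/2 := abs_of_pos (by linarith)
      rw [hηa]
      nlinarith
    have := mul_le_mul_of_nonneg_left hb hη.le
    rw [hs2]
    nlinarith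
  -- main induction
  have key : ∀ k : ℕ, k ≤ K →
      ‖(leapfrog f η k (q,p)).1 - (leapfrog f η k (q',p')).1‖
          ≤ (‖q - q'‖ + (k:ℝ) * (η * ‖p - p'‖)) * (1 + ((k:ℝ)*s)^2)
      ∧ η * ‖(leapfrog f η k (q,p)).2 - (leapfrog f η k (q',p')).2‖
          ≤ η * ‖p - p'‖ + 2 * (k:ℝ) * s^2 * (‖q - q'‖ + (k:ℝ) * (η * ‖p - p'‖)) := by
    refine seq_bound (fun k => ‖(leapfrog f η k (q,p)).1 - (leapfrog f η k (q',p')).1‖)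
      (fun k => η * ‖(leapfrog f η k (q,p)).2 - (leapfrog f η k (q',p')).2‖)
      s ‖q - q'‖ (η * ‖p - p'‖) K hs0 hA hY hKs ?_ ?_ hx hy
    · simp [leapfrog]
    · simp [leapfrog]
  -- conclude
  obtain ⟨hXj, -⟩ := key j hjK
  have hj0 : (0:ℝ) ≤ (j:ℝ) := Nat.cast_nonneg j
  have hjs : (j:ℝ)*s ≤ 1/2 := by
    have : (j:ℝ) ≤ K := by exact_mod_cast hjK
    nlinarith [mul_le_mul_of_nonneg_right this hs0]
  have hjs2 : ((j:ℝ)*s)^2 ≤ 1/4 := by nlinarith [mul_nonneg hj0 hs0]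
  have hC0 : (0:ℝ) ≤ ‖q - q'‖ + (j:ℝ) * (η * ‖p - p'‖) := by positivity
  nlinarith [mul_le_mul_of_nonneg_left hjs2 hC0]
end

section
/- Let ℓ ≥ 1 be an integer and let H ∈ ℝ^{d×d} be a symmetric positive semidefinite matrix with tr(H) ≤ Υ and ‖H‖₂ ≤ L. Then for p ~ N(0, I_d), ( E (pᵀ H p)^ℓ )^{1/ℓ} ≤ Υ + 2(ℓ−1)L; in particular, if H = ∇²f_x for an L-smooth f with tr(∇²f_x) ≤ Υ, this bound is at most L (d + 2ℓ − 2). -/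
open MeasureTheory Real
open scoped ENNReal NNReal

open scoped RealInnerProductSpace

/-!
Gaussian integration by parts, `E[gᵢ P(g)] = E[∂ᵢ P(g)]`, applied to `Q * Q^m` with
`Q(x) = xᵀ H x` gives `E[Q^(m+1)] = tr H · E[Q^m] + 2m · E[|H g|² Q^(m-1)]`. For `H ⪰ 0` with
`‖H‖ ≤ L` we have `|H x|² ≤ L · Q(x)`, hence `E[Q^(m+1)] ≤ (tr H + 2mL) · E[Q^m]`, and by induction
`E[Q^ℓ] ≤ ∏_{m<ℓ} (tr H + 2mL) ≤ (Υ + 2(ℓ-1)L)^ℓ`. The second bound is the first with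
`Υ = d L ≥ tr H`.

Working with `Q` as a polynomial makes every integrability condition automatic, and reduces
integration by parts, monomial by monomial, to the moment recursion `E[g^(n+1)] = n E[g^(n-1)]`
of a standard real Gaussian.
-/

open ProbabilityTheory
open scoped Matrix

lemma integrable_pow_gaussianReal (n : ℕ) : Integrable (fun x : ℝ => x ^ n) (gaussianReal 0 1) := by
  rcases n.eq_zero_or_pos with rfl | hn
  · simp
  · refine (integrable_norm_iff (by fun_prop)).mp ?_
    simpa [norm_pow] using (memLp_id_gaussianReal (μ := 0) (v := 1) n).integrable_norm_pow hn.ne'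

lemma gaussianPDFReal_zero_one :
    gaussianPDFReal 0 1 = fun x => (√(2 * π))⁻¹ * exp (-(1 / 2) * x ^ 2) := by
  ext x; simp only [gaussianPDFReal, NNReal.coe_one, mul_one, sub_zero]; ring_nf

lemma integrable_pow_mul_gaussianPDFReal (n : ℕ) :
    Integrable fun x : ℝ => x ^ n * gaussianPDFReal 0 1 x := by
  have h := (integrable_rpow_mul_exp_neg_mul_sq (b := 1 / 2) (by norm_num)
    (s := n) (by linarith [n.cast_nonneg (α := ℝ)])).const_mul (√(2 * π))⁻¹
  simp only [rpow_natCast] at h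
  rw [gaussianPDFReal_zero_one]
  exact h.congr (ae_of_all _ fun x => by ring)

lemma hasDerivAt_gaussianPDFReal (x : ℝ) :
    HasDerivAt (gaussianPDFReal 0 1) (-x * gaussianPDFReal 0 1 x) x := by
  rw [gaussianPDFReal_zero_one]
  refine (((hasDerivAt_pow 2 x).const_mul _).exp.const_mul _).congr_deriv ?_
  push_cast; ring

lemma integral_pow_succ_gaussianReal (n : ℕ) :
    ∫ x, x ^ (n + 1) ∂gaussianReal 0 1 = n * ∫ x, x ^ (n - 1) ∂gaussianReal 0 1 := by
  simp only [integral_gaussianReal_eq_integral_smul one_ne_zero, smul_eq_mul]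
  have hibp := integral_mul_deriv_eq_deriv_mul_of_integrable
    (u := fun x : ℝ => x ^ n) (v := gaussianPDFReal 0 1)
    (fun x _ => hasDerivAt_pow n x) (fun x _ => hasDerivAt_gaussianPDFReal x)
    ((integrable_pow_mul_gaussianPDFReal (n + 1)).neg.congr (ae_of_all _ fun x => by
      simp only [Pi.mul_apply, Pi.neg_apply]; ring))
    (((integrable_pow_mul_gaussianPDFReal (n - 1)).const_mul n).congr (ae_of_all _ fun x => by
      simp only [Pi.mul_apply]; ring))
    (integrable_pow_mul_gaussianPDFReal n)
  rw [← integral_const_mul]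
  calc ∫ x, gaussianPDFReal 0 1 x * x ^ (n + 1) = -∫ x, x ^ n * (-x * gaussianPDFReal 0 1 x) := by
        rw [← integral_neg]; congr 1; ext x; ring
    _ = _ := by rw [hibp, neg_neg]; congr 1; ext x; ring

namespace MvPolynomial

variable {σ : Type*} [Fintype σ]

lemma integrable_eval_gaussian (P : MvPolynomial σ ℝ) :
    Integrable (fun x => eval x P) (Measure.pi fun _ : σ => gaussianReal 0 1) := by
  induction P using MvPolynomial.induction_on' with
  | monomial k c =>
    simp only [eval_monomial, Finsupp.prod_fintype _ _ fun i => pow_zero _]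
    exact (Integrable.fintype_prod fun i => integrable_pow_gaussianReal (k i)).const_mul c
  | add P Q hP hQ => simp only [map_add]; exact hP.add hQ

variable (σ) in
noncomputable def gaussianExpectation : MvPolynomial σ ℝ →ₗ[ℝ] ℝ where
  toFun P := ∫ x, eval x P ∂(Measure.pi fun _ : σ => gaussianReal 0 1)
  map_add' P Q := by
    simpa using integral_add (integrable_eval_gaussian P) (integrable_eval_gaussian Q)
  map_smul' c P := by simp [smul_eval, integral_const_mul]

lemma gaussianExpectation_apply (P : MvPolynomial σ ℝ) :
    gaussianExpectation σ P = ∫ x, eval x P ∂(Measure.pi fun _ : σ => gaussianReal 0 1) := rfl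

lemma gaussianExpectation_mono {P Q : MvPolynomial σ ℝ} (h : ∀ x, eval x P ≤ eval x Q) :
    gaussianExpectation σ P ≤ gaussianExpectation σ Q :=
  integral_mono (integrable_eval_gaussian P) (integrable_eval_gaussian Q) h

lemma gaussianExpectation_monomial (k : σ →₀ ℕ) (c : ℝ) :
    gaussianExpectation σ (monomial k c) = c * ∏ i, ∫ x, x ^ k i ∂gaussianReal 0 1 := by
  simp only [gaussianExpectation_apply, eval_monomial,
    Finsupp.prod_fintype _ _ fun i => pow_zero _, integral_const_mul]
  rw [integral_fintype_prod_eq_prod (fun i x => x ^ k i)]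

lemma gaussianExpectation_X_mul [DecidableEq σ] (i : σ) (P : MvPolynomial σ ℝ) :
    gaussianExpectation σ (X i * P) = gaussianExpectation σ (pderiv i P) := by
  suffices gaussianExpectation σ ∘ₗ LinearMap.mulLeft ℝ (X i) =
      gaussianExpectation σ ∘ₗ (pderiv i).toLinearMap from LinearMap.congr_fun this P
  refine linearMap_ext fun k => LinearMap.ext fun c => ?_
  have hmul : X i * monomial k c = monomial (Finsupp.single i 1 + k) c := by
    rw [monomial_single_add, pow_one]
  simp only [LinearMap.comp_apply, LinearMap.mulLeft_apply, Derivation.coeFn_coe, hmul,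
    pderiv_monomial, gaussianExpectation_monomial, Fintype.prod_eq_mul_prod_compl i,
    Finsupp.add_apply, Finsupp.tsub_apply, Finsupp.single_eq_same, add_comm 1,
    integral_pow_succ_gaussianReal, ← mul_assoc]
  congr 1
  refine Finset.prod_congr rfl fun j hj => ?_
  rw [Finset.mem_compl, Finset.mem_singleton] at hj
  simp [Ne.symm hj]

variable (H : Matrix σ σ ℝ)

noncomputable def mulVecPoly (i : σ) : MvPolynomial σ ℝ := ∑ j, C (H i j) * X j

noncomputable def quadraticPoly : MvPolynomial σ ℝ := ∑ i, X i * mulVecPoly H i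

lemma eval_mulVecPoly (x : σ → ℝ) (i : σ) : eval x (mulVecPoly H i) = (H *ᵥ x) i := by
  simp [mulVecPoly, Matrix.mulVec, dotProduct]

lemma eval_quadraticPoly (x : σ → ℝ) : eval x (quadraticPoly H) = x ⬝ᵥ H *ᵥ x := by
  simp [quadraticPoly, eval_mulVecPoly, dotProduct]

lemma pderiv_mulVecPoly [DecidableEq σ] (i j : σ) : pderiv j (mulVecPoly H i) = C (H i j) := by
  simp [mulVecPoly, pderiv_X, Pi.single_apply]

lemma eval_pderiv_quadraticPoly [DecidableEq σ] {H : Matrix σ σ ℝ} (hH : H.IsSymm)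
    (x : σ → ℝ) (i : σ) :
    eval x (pderiv i (quadraticPoly H)) = 2 * (H *ᵥ x) i := by
  have hsymm : ∑ j, x j * H j i = (H *ᵥ x) i := by
    simp only [Matrix.mulVec, dotProduct, hH.apply i, mul_comm]
  simp [quadraticPoly, pderiv_X, Pi.single_apply, pderiv_mulVecPoly, eval_mulVecPoly, hsymm,
    Finset.sum_add_distrib]
  ring

lemma gaussianExpectation_quadraticPoly_mul [DecidableEq σ] (P : MvPolynomial σ ℝ) :
    gaussianExpectation σ (quadraticPoly H * P) =
      H.trace * gaussianExpectation σ P +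
        gaussianExpectation σ (∑ i, mulVecPoly H i * pderiv i P) := by
  simp only [quadraticPoly, Finset.sum_mul, map_sum, mul_assoc, gaussianExpectation_X_mul,
    Derivation.leibniz, pderiv_mulVecPoly, smul_eq_mul, map_add, Finset.sum_add_distrib,
    mul_comm P, C_mul', map_smul, Matrix.trace, Matrix.diag_apply, Finset.sum_mul]
  ring

lemma eval_sum_mulVecPoly_mul_pderiv_pow [DecidableEq σ] {H : Matrix σ σ ℝ} (hH : H.IsSymm)
    (m : ℕ) (x : σ → ℝ) :
    eval x (∑ i, mulVecPoly H i * pderiv i (quadraticPoly H ^ m)) =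
      2 * m * (x ⬝ᵥ H *ᵥ x) ^ (m - 1) * ((H *ᵥ x) ⬝ᵥ (H *ᵥ x)) := by
  simp only [map_sum, map_mul, Derivation.leibniz_pow, smul_eq_mul, nsmul_eq_mul, map_natCast,
    map_pow, eval_pderiv_quadraticPoly hH, eval_mulVecPoly, eval_quadraticPoly, dotProduct,
    Finset.mul_sum]
  exact Finset.sum_congr rfl fun i _ => by ring

lemma gaussianExpectation_quadraticPoly_pow_succ_le [DecidableEq σ] {H : Matrix σ σ ℝ} {L : ℝ}
    (hH : H.PosSemidef) (hHL : ∀ x, (H *ᵥ x) ⬝ᵥ (H *ᵥ x) ≤ L * (x ⬝ᵥ H *ᵥ x)) (m : ℕ) :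
    gaussianExpectation σ (quadraticPoly H ^ (m + 1)) ≤
      (H.trace + 2 * m * L) * gaussianExpectation σ (quadraticPoly H ^ m) := by
  have hcross : ∀ x, eval x (∑ i, mulVecPoly H i * pderiv i (quadraticPoly H ^ m)) ≤
      eval x (C (2 * m * L) * quadraticPoly H ^ m) := by
    intro x
    have hq : 0 ≤ x ⬝ᵥ H *ᵥ x := by simpa using hH.dotProduct_mulVec_nonneg x
    rw [eval_sum_mulVecPoly_mul_pderiv_pow (Matrix.isHermitian_iff_isSymm.mp hH.isHermitian),
      map_mul, eval_C, map_pow, eval_quadraticPoly]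
    rcases m with _ | m
    · simp
    · calc 2 * ((m + 1 : ℕ) : ℝ) * (x ⬝ᵥ H *ᵥ x) ^ (m + 1 - 1) * ((H *ᵥ x) ⬝ᵥ (H *ᵥ x))
          ≤ 2 * ((m + 1 : ℕ) : ℝ) * (x ⬝ᵥ H *ᵥ x) ^ m * (L * (x ⬝ᵥ H *ᵥ x)) := by
            rw [Nat.add_sub_cancel]; gcongr; exact hHL x
        _ = _ := by ring
  calc gaussianExpectation σ (quadraticPoly H ^ (m + 1))
      = H.trace * gaussianExpectation σ (quadraticPoly H ^ m) +
          gaussianExpectation σ (∑ i, mulVecPoly H i * pderiv i (quadraticPoly H ^ m)) := by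
        rw [pow_succ', gaussianExpectation_quadraticPoly_mul]
    _ ≤ H.trace * gaussianExpectation σ (quadraticPoly H ^ m) +
          gaussianExpectation σ (C (2 * m * L) * quadraticPoly H ^ m) := by
        gcongr; exact gaussianExpectation_mono hcross
    _ = _ := by rw [C_mul', map_smul, smul_eq_mul]; ring

lemma gaussianExpectation_quadraticPoly_pow_le_prod [DecidableEq σ] {H : Matrix σ σ ℝ} {L : ℝ}
    (hH : H.PosSemidef) (hL : 0 ≤ L)
    (hHL : ∀ x, (H *ᵥ x) ⬝ᵥ (H *ᵥ x) ≤ L * (x ⬝ᵥ H *ᵥ x)) (ℓ : ℕ) :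
    gaussianExpectation σ (quadraticPoly H ^ ℓ) ≤ ∏ m ∈ Finset.range ℓ, (H.trace + 2 * m * L) := by
  induction ℓ with
  | zero => simp [gaussianExpectation_apply]
  | succ m ih =>
    have hfactor : 0 ≤ H.trace + 2 * m * L := by have := hH.trace_nonneg; positivity
    calc gaussianExpectation σ (quadraticPoly H ^ (m + 1))
        ≤ (H.trace + 2 * m * L) * gaussianExpectation σ (quadraticPoly H ^ m) :=
          gaussianExpectation_quadraticPoly_pow_succ_le hH hHL m
      _ ≤ (H.trace + 2 * m * L) * ∏ k ∈ Finset.range m, (H.trace + 2 * k * L) := by gcongr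
      _ = _ := by rw [Finset.prod_range_succ, mul_comm]

end MvPolynomial

namespace Matrix

variable {ι : Type*} [Fintype ι]

lemma inner_toLp_toEuclideanLin [DecidableEq ι] (H : Matrix ι ι ℝ) (v : ι → ℝ) :
    ⟪WithLp.toLp 2 v, toEuclideanLin H (WithLp.toLp 2 v)⟫ = v ⬝ᵥ H *ᵥ v := by
  simp [EuclideanSpace.inner_eq_star_dotProduct, dotProduct_comm]

lemma dotProduct_mulVec_le_of_norm_le [DecidableEq ι] {H : Matrix ι ι ℝ} {L : ℝ}
    (hop : ‖LinearMap.toContinuousLinearMap (toEuclideanLin H)‖ ≤ L) (v : ι → ℝ) :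
    v ⬝ᵥ H *ᵥ v ≤ L * (v ⬝ᵥ v) := by
  set T := LinearMap.toContinuousLinearMap (toEuclideanLin H)
  set p : EuclideanSpace ℝ ι := WithLp.toLp 2 v
  have hnorm : ‖p‖ * ‖p‖ = v ⬝ᵥ v := by
    rw [← real_inner_self_eq_norm_mul_norm, EuclideanSpace.inner_eq_star_dotProduct]
    simp [p]
  calc v ⬝ᵥ H *ᵥ v = ⟪p, T p⟫ := (inner_toLp_toEuclideanLin H v).symm
    _ ≤ ‖p‖ * ‖T p‖ := real_inner_le_norm p (T p)
    _ ≤ ‖p‖ * (L * ‖p‖) := by gcongr; exact T.le_of_opNorm_le hop p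
    _ = L * (v ⬝ᵥ v) := by rw [← hnorm]; ring

lemma trace_le_card_mul {H : Matrix ι ι ℝ} {L : ℝ} [DecidableEq ι]
    (hHL : ∀ v, v ⬝ᵥ H *ᵥ v ≤ L * (v ⬝ᵥ v)) : H.trace ≤ Fintype.card ι * L := by
  calc H.trace = ∑ i, Pi.single i 1 ⬝ᵥ H *ᵥ Pi.single i 1 := by
        simp [trace, mulVec_single, single_dotProduct]
    _ ≤ ∑ _i : ι, L := Finset.sum_le_sum fun i _ => by simpa using hHL (Pi.single i 1)
    _ = Fintype.card ι * L := by simp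

open scoped MatrixOrder in
/-- Writing `H = B * B` with `B = √H`, this is `⟪B v, H (B v)⟫ ≤ L ‖B v‖²`. -/
lemma PosSemidef.mulVec_dotProduct_mulVec_le [DecidableEq ι] {H : Matrix ι ι ℝ} {L : ℝ}
    (hH : H.PosSemidef) (hHL : ∀ v, v ⬝ᵥ H *ᵥ v ≤ L * (v ⬝ᵥ v)) (v : ι → ℝ) :
    (H *ᵥ v) ⬝ᵥ (H *ᵥ v) ≤ L * (v ⬝ᵥ H *ᵥ v) := by
  set B := CFC.sqrt H
  have hBt : Bᵀ = B :=
    isHermitian_iff_isSymm.mp (nonneg_iff_posSemidef.mp (CFC.sqrt_nonneg H)).isHermitian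
  have hBB : B * B = H := CFC.sqrt_mul_sqrt_self H hH.nonneg
  have hsymm : ∀ u w, (B *ᵥ u) ⬝ᵥ w = u ⬝ᵥ B *ᵥ w := fun u w => by
    rw [dotProduct_mulVec, ← mulVec_transpose, hBt]
  calc (H *ᵥ v) ⬝ᵥ (H *ᵥ v) = (B *ᵥ v) ⬝ᵥ H *ᵥ (B *ᵥ v) := by
        rw [← hBB, ← mulVec_mulVec, hsymm, mulVec_mulVec, mulVec_mulVec]
    _ ≤ L * ((B *ᵥ v) ⬝ᵥ (B *ᵥ v)) := hHL _
    _ = L * (v ⬝ᵥ H *ᵥ v) := by rw [hsymm, mulVec_mulVec, hBB]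

end Matrix

open MvPolynomial

lemma lintegral_stdGaussian_ofReal_inner_pow {d : ℕ} {H : Matrix (Fin d) (Fin d) ℝ}
    (hH : H.PosSemidef) (ℓ : ℕ) :
    ∫⁻ p : Euc d, ENNReal.ofReal (⟪p, Matrix.toEuclideanLin H p⟫ ^ ℓ) ∂stdGaussian d =
      ENNReal.ofReal (gaussianExpectation (Fin d) (quadraticPoly H ^ ℓ)) := by
  have hmap : stdGaussian d =
      (Measure.pi fun _ : Fin d => gaussianReal 0 1).map (MeasurableEquiv.toLp 2 (Fin d → ℝ)) :=
    rfl
  have heval : ∀ x : Fin d → ℝ, 0 ≤ eval x (quadraticPoly H ^ ℓ) := fun x => by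
    simpa [eval_quadraticPoly] using pow_nonneg (hH.dotProduct_mulVec_nonneg x) ℓ
  rw [hmap, lintegral_map_equiv, gaussianExpectation_apply,
    ofReal_integral_eq_lintegral_ofReal (integrable_eval_gaussian _) (ae_of_all _ heval)]
  congr with x
  simp only [MeasurableEquiv.coe_toLp, Matrix.inner_toLp_toEuclideanLin, map_pow,
    eval_quadraticPoly]

lemma lintegral_stdGaussian_ofReal_inner_pow_rpow_inv_le {d : ℕ} {H : Matrix (Fin d) (Fin d) ℝ}
    {L Υ : ℝ} {ℓ : ℕ} (hℓ : 1 ≤ ℓ) (hH : H.PosSemidef) (htr : H.trace ≤ Υ)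
    (hop : ‖LinearMap.toContinuousLinearMap (Matrix.toEuclideanLin H)‖ ≤ L) :
    (∫⁻ p : Euc d, ENNReal.ofReal (⟪p, Matrix.toEuclideanLin H p⟫ ^ ℓ) ∂stdGaussian d) ^
        (ℓ : ℝ)⁻¹ ≤ ENNReal.ofReal (Υ + 2 * ((ℓ : ℝ) - 1) * L) := by
  have hL : 0 ≤ L := (norm_nonneg _).trans hop
  have hHL := Matrix.dotProduct_mulVec_le_of_norm_le hop
  have htr0 := hH.trace_nonneg
  have hℓ' : (1 : ℝ) ≤ ℓ := by exact_mod_cast hℓ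
  have hB : 0 ≤ Υ + 2 * ((ℓ : ℝ) - 1) * L := by nlinarith
  have hprod :
      ∏ m ∈ Finset.range ℓ, (H.trace + 2 * m * L) ≤ (Υ + 2 * ((ℓ : ℝ) - 1) * L) ^ ℓ := by
    calc ∏ m ∈ Finset.range ℓ, (H.trace + 2 * m * L)
        ≤ ∏ _m ∈ Finset.range ℓ, (Υ + 2 * ((ℓ : ℝ) - 1) * L) := by
          refine Finset.prod_le_prod (fun m _ => by positivity) fun m hm => ?_
          have : (m : ℝ) ≤ ℓ - 1 := by
            rw [Finset.mem_range] at hm; rw [le_sub_iff_add_le]; exact_mod_cast hm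
          gcongr
      _ = _ := by simp
  rw [lintegral_stdGaussian_ofReal_inner_pow hH, ENNReal.rpow_inv_le_iff (by positivity),
    ENNReal.rpow_natCast, ← ENNReal.ofReal_pow hB]
  have hmoment := gaussianExpectation_quadraticPoly_pow_le_prod hH hL
    (hH.mulVec_dotProduct_mulVec_le hHL) ℓ
  exact ENNReal.ofReal_le_ofReal (hmoment.trans hprod)

theorem gaussian_quadratic_form_moment_bound_general {d : ℕ} (H : Matrix (Fin d) (Fin d) ℝ)
    (L Υ : ℝ) (ℓ : ℕ) (hℓ : 1 ≤ ℓ) (hpsd : H.PosSemidef)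
    (htr : H.trace ≤ Υ)
    (hop : ‖LinearMap.toContinuousLinearMap (Matrix.toEuclideanLin H)‖ ≤ L) :
    (∫⁻ p : Euc d, ENNReal.ofReal ((⟪p, Matrix.toEuclideanLin H p⟫) ^ ℓ)
        ∂(stdGaussian d)) ^ ((ℓ : ℝ)⁻¹)
      ≤ ENNReal.ofReal (Υ + 2 * ((ℓ : ℝ) - 1) * L) ∧
    (∫⁻ p : Euc d, ENNReal.ofReal ((⟪p, Matrix.toEuclideanLin H p⟫) ^ ℓ)
        ∂(stdGaussian d)) ^ ((ℓ : ℝ)⁻¹)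
      ≤ ENNReal.ofReal (L * ((d : ℝ) + 2 * (ℓ : ℝ) - 2)) := by
  refine ⟨lintegral_stdGaussian_ofReal_inner_pow_rpow_inv_le hℓ hpsd htr hop, ?_⟩
  have htr' : H.trace ≤ d * L := by
    simpa using Matrix.trace_le_card_mul (Matrix.dotProduct_mulVec_le_of_norm_le hop)
  convert lintegral_stdGaussian_ofReal_inner_pow_rpow_inv_le hℓ hpsd htr' hop using 2
  ring

/-- **Lemma (Gaussian quadratic form moment bound).** -/
theorem gaussian_quadratic_form_moment_bound {d : ℕ} (H : Matrix (Fin d) (Fin d) ℝ)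
    (L Υ : ℝ) (ℓ : ℕ) (hℓ : 1 ≤ ℓ) (hsymm : H.IsSymm) (hpsd : H.PosSemidef)
    (htr : H.trace ≤ Υ)
    (hop : ‖LinearMap.toContinuousLinearMap (Matrix.toEuclideanLin H)‖ ≤ L) :
    (∫⁻ p : Euc d, ENNReal.ofReal ((⟪p, Matrix.toEuclideanLin H p⟫) ^ ℓ)
        ∂(stdGaussian d)) ^ ((ℓ : ℝ)⁻¹)
      ≤ ENNReal.ofReal (Υ + 2 * ((ℓ : ℝ) - 1) * L) ∧
    (∫⁻ p : Euc d, ENNReal.ofReal ((⟪p, Matrix.toEuclideanLin H p⟫) ^ ℓ)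
        ∂(stdGaussian d)) ^ ((ℓ : ℝ)⁻¹)
      ≤ ENNReal.ofReal (L * ((d : ℝ) + 2 * (ℓ : ℝ) - 2)) :=
  gaussian_quadratic_form_moment_bound_general H L Υ ℓ hℓ hpsd htr hop
end
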